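/- arXiv:1910.08421 — 2 statements merged into one kernel-verified Lean document; each statement's English description precedes it below -/
import Mathlib

section
/- Let W = (x₀, …, x_{n-1}) be a walk in Δ from u to v, and let Γ = GenCov(Δ,G,ω,ζ). Define the voltage of W as the subset ζ(W) = ζ(x_{n-1})ω(v_{n-1}) · ζ(x_{n-2})ω(v_{n-2}) ⋯ ζ(x₀)ω(v₀) of G, where v_i = beg x_i. Then the set of final vertices of walks in Γ of length n that start at (u, ω(u)) and project to W under the covering projection is exactly {(v, ω(v)z) : z ∈ ζ(W)}. -/
/-- A graph in the sense of Malnič–Nedela–Škoviera: vertices, darts,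
an initial-vertex function and an involutory dart-reversal. -/
structure PreGraph (V D : Type*) where
  beg : D → V
  inv : D → D
  inv_inv : ∀ x, inv (inv x) = x

/-- The terminal vertex of a dart. -/
def PreGraph.term {V D : Type*} (Δ : PreGraph V D) (x : D) : V := Δ.beg (Δ.inv x)

/-- A generalised voltage graph on a graph `Δ`: a weight function
(given on vertices by `ωv` and on darts by `ωd`) and a voltage assignment `ζ`
satisfying the three defining conditions. -/
structure GenVoltage (V D : Type*) (G : Type*) [Group G] (Δ : PreGraph V D) where
  ωv : V → Subgroup G
  ωd : D → Subgroup G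
  ζ : D → G
  wle : ∀ x, ωd x ≤ ωv (Δ.beg x)
  wconj : ∀ x g, g ∈ ωd x ↔ ζ x * g * (ζ x)⁻¹ ∈ ωd (Δ.inv x)
  wcyc : ∀ x, ζ (Δ.inv x) * ζ x ∈ ωd x

namespace GenVoltage

variable {V D G : Type*} [Group G] {Δ : PreGraph V D} (Θ : GenVoltage V D G Δ)

/-- Vertices of the generalised cover: pairs `(v, ω(v)g)` of a vertex of `Δ`
and a right coset of its weight group. -/
abbrev CovV := Σ v : V, Quotient (QuotientGroup.rightRel (Θ.ωv v))

/-- Darts of the generalised cover: pairs `(x, ω(x)g)`. -/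
abbrev CovD := Σ x : D, Quotient (QuotientGroup.rightRel (Θ.ωd x))

/-- The cover vertex `(v, ω(v)g)`. -/
def vmk (v : V) (g : G) : Θ.CovV := ⟨v, Quotient.mk _ g⟩

/-- The cover dart `(x, ω(x)g)`. -/
def dmk (x : D) (g : G) : Θ.CovD := ⟨x, Quotient.mk _ g⟩

/-- `beg` of the cover: `(x, ω(x)g) ↦ (beg x, ω(beg x)g)`. -/
def covBeg : Θ.CovD → Θ.CovV :=
  fun p => ⟨Δ.beg p.1, Quotient.map id (fun g h hgh => by
    have h1 : h * g⁻¹ ∈ Θ.ωd p.1 := QuotientGroup.rightRel_apply.mp hgh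
    exact QuotientGroup.rightRel_apply.mpr (Θ.wle p.1 h1)) p.2⟩

/-- `inv` of the cover: `(x, ω(x)g) ↦ (x⁻¹, ω(x⁻¹)ζ(x)g)`. -/
def covInv : Θ.CovD → Θ.CovD :=
  fun p => ⟨Δ.inv p.1, Quotient.map (fun g => Θ.ζ p.1 * g) (fun g h hgh => by
    have h1 : h * g⁻¹ ∈ Θ.ωd p.1 := QuotientGroup.rightRel_apply.mp hgh
    have h2 := (Θ.wconj p.1 (h * g⁻¹)).1 h1
    exact QuotientGroup.rightRel_apply.mpr (by simpa [mul_assoc, mul_inv_rev] using h2)) p.2⟩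

/-- Terminal vertex of a cover dart. -/
def covTerm : Θ.CovD → Θ.CovV := fun p => Θ.covBeg (Θ.covInv p)

/-- Right translation by `h` on the cover: `(x, ω(x)g) ↦ (x, ω(x)gh)`, on vertices. -/
def covRightV (h : G) : Θ.CovV → Θ.CovV :=
  fun p => ⟨p.1, Quotient.map (fun g => g * h) (fun a b hab => by
    have h1 := QuotientGroup.rightRel_apply.mp hab
    exact QuotientGroup.rightRel_apply.mpr (by simpa [mul_assoc, mul_inv_rev] using h1)) p.2⟩

/-- Right translation by `h` on the cover, on darts. -/
def covRightD (h : G) : Θ.CovD → Θ.CovD :=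
  fun p => ⟨p.1, Quotient.map (fun g => g * h) (fun a b hab => by
    have h1 := QuotientGroup.rightRel_apply.mp hab
    exact QuotientGroup.rightRel_apply.mpr (by simpa [mul_assoc, mul_inv_rev] using h1)) p.2⟩

end GenVoltage

/-- Walks with respect to abstract initial/terminal vertex functions `B`, `T`:
`WalkBT B T u v l` means `l` is a walk from `u` to `v`. -/
inductive WalkBT {Vt Dt : Type*} (B T : Dt → Vt) : Vt → Vt → List Dt → Prop
  | nil (v : Vt) : WalkBT B T v v []
  | cons (x : Dt) {v : Vt} {l : List Dt} :
      WalkBT B T (T x) v l → WalkBT B T (B x) v (x :: l)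


open scoped Pointwise in
/-- The voltage of a walk `(x₀, …, x_{n-1})`:
`ζ(W) = ζ(x_{n-1})ω(v_{n-1}) ⋯ ζ(x₀)ω(v₀)` as a subset of `G`. -/
def wvolt {V D G : Type*} [Group G] {Δ : PreGraph V D} (Θ : GenVoltage V D G Δ) :
    List D → Set G
  | [] => {1}
  | x :: l => wvolt Θ l * ((Θ.ζ x) • (Θ.ωv (Δ.beg x) : Set G))


/-!
A lift of a walk is built dart by dart: a dart `x` lifted at `(beg x, ω(beg x)g)` is
`(x, ω(x)wg)` for some `w ∈ ω(beg x)`, and it ends at `(term x, ω(term x)ζ(x)wg)`.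
Hence lifts starting at `(u, ω(u)g)` end exactly at the vertices `(v, ω(v)zg)` with
`z ∈ ζ(W)`, by induction on `W`; the theorem is the case `g = 1`.
-/

namespace WalkBT

variable {Vt Dt α : Type*} {B T : Dt → Vt} (f : Dt → α)

theorem exists_map_eq_nil_iff {s t : Vt} :
    (∃ L, WalkBT B T s t L ∧ L.map f = []) ↔ s = t := by
  constructor
  · rintro ⟨L, hL, hmap⟩
    rw [List.map_eq_nil_iff] at hmap
    subst hmap
    cases hL
    rfl
  · rintro rfl
    exact ⟨[], .nil s, rfl⟩

theorem exists_map_eq_cons_iff {s t : Vt} {a : α} {l : List α} :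
    (∃ L, WalkBT B T s t L ∧ L.map f = a :: l) ↔
      ∃ d, f d = a ∧ B d = s ∧ ∃ L, WalkBT B T (T d) t L ∧ L.map f = l := by
  constructor
  · rintro ⟨L, hL, hmap⟩
    obtain ⟨d, L', rfl, hd, hL'⟩ := List.map_eq_cons_iff.mp hmap
    cases hL with
    | cons _ hrest => exact ⟨d, hd, rfl, L', hrest, hL'⟩
  · rintro ⟨d, hd, rfl, L, hL, hmap⟩
    exact ⟨d :: L, .cons d hL, by rw [List.map_cons, hd, hmap]⟩

end WalkBT

namespace GenVoltage

variable {V D G : Type*} [Group G] {Δ : PreGraph V D} (Θ : GenVoltage V D G Δ)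

theorem vmk_eq_vmk_iff (w : V) (a b : G) : Θ.vmk w a = Θ.vmk w b ↔ b * a⁻¹ ∈ Θ.ωv w := by
  rw [vmk, vmk, Sigma.mk.inj_iff, heq_eq_eq, Quotient.eq, QuotientGroup.rightRel_apply]
  exact and_iff_right rfl

theorem covBeg_dmk (x : D) (h : G) : Θ.covBeg (Θ.dmk x h) = Θ.vmk (Δ.beg x) h := rfl

theorem exists_dart_lift_iff (x : D) (g : G) (P : Θ.CovV → Prop) :
    (∃ d : Θ.CovD, d.1 = x ∧ Θ.covBeg d = Θ.vmk (Δ.beg x) g ∧ P (Θ.covTerm d)) ↔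
      ∃ w ∈ Θ.ωv (Δ.beg x), P (Θ.vmk (Δ.term x) (Θ.ζ x * (w * g))) := by
  constructor
  · rintro ⟨⟨x, c⟩, rfl, hbeg, hP⟩
    induction c using Quotient.inductionOn with
    | h h =>
      refine ⟨h * g⁻¹, ?_, by rwa [inv_mul_cancel_right]⟩
      exact (Θ.vmk_eq_vmk_iff _ _ _).mp hbeg.symm
  · rintro ⟨w, hw, hP⟩
    refine ⟨Θ.dmk x (w * g), rfl, ?_, hP⟩
    rw [covBeg_dmk, vmk_eq_vmk_iff, mul_inv_rev, mul_inv_cancel_left]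
    exact inv_mem hw

end GenVoltage

section

variable {V D G : Type*} [Group G] {Δ : PreGraph V D} (Θ : GenVoltage V D G Δ)

open scoped Pointwise in
theorem mem_wvolt_cons (x : D) (l : List D) (z : G) :
    z ∈ wvolt Θ (x :: l) ↔ ∃ y ∈ wvolt Θ l, ∃ w ∈ Θ.ωv (Δ.beg x), y * (Θ.ζ x * w) = z := by
  simp only [wvolt, Set.mem_mul, Set.mem_smul_set, SetLike.mem_coe, smul_eq_mul]
  constructor
  · rintro ⟨y, hy, _, ⟨w, hw, rfl⟩, rfl⟩
    exact ⟨y, hy, w, hw, rfl⟩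
  · rintro ⟨y, hy, w, hw, rfl⟩
    exact ⟨y, hy, _, ⟨w, hw, rfl⟩, rfl⟩

theorem exists_lift_iff_mem_wvolt {u v : V} {l : List D} (hW : WalkBT Δ.beg Δ.term u v l)
    (g : G) (q : Θ.CovV) :
    (∃ L : List Θ.CovD,
        WalkBT Θ.covBeg Θ.covTerm (Θ.vmk u g) q L ∧ L.map Sigma.fst = l) ↔
      ∃ z ∈ wvolt Θ l, q = Θ.vmk v (z * g) := by
  induction hW generalizing g with
  | nil w =>
    rw [WalkBT.exists_map_eq_nil_iff]
    simp only [wvolt, Set.mem_singleton_iff, exists_eq_left, one_mul, eq_comm]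
  | @cons x v l hW ih =>
    refine (WalkBT.exists_map_eq_cons_iff _).trans ((Θ.exists_dart_lift_iff x g
      fun p => ∃ L, WalkBT Θ.covBeg Θ.covTerm p q L ∧ L.map Sigma.fst = l).trans ?_)
    simp only [ih, mem_wvolt_cons]
    constructor
    · rintro ⟨w, hw, y, hy, rfl⟩
      exact ⟨_, ⟨y, hy, w, hw, rfl⟩, by simp only [mul_assoc]⟩
    · rintro ⟨_, ⟨y, hy, w, hw, rfl⟩, rfl⟩
      exact ⟨w, hw, y, hy, by simp only [mul_assoc]⟩

end

/-- The final vertices of lifts of a `uv`-walk `W` starting at `(u, ω(u))` are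
exactly the vertices `(v, ω(v)z)` with `z ∈ ζ(W)`. -/
theorem stmt_13 {V D G : Type*} [Group G] {Δ : PreGraph V D}
    (Θ : GenVoltage V D G Δ) (u v : V) (l : List D)
    (hW : WalkBT Δ.beg Δ.term u v l) :
    {q : Θ.CovV | ∃ L : List Θ.CovD,
        WalkBT Θ.covBeg Θ.covTerm (Θ.vmk u 1) q L ∧ L.map Sigma.fst = l} =
    {q : Θ.CovV | ∃ z ∈ wvolt Θ l, q = Θ.vmk v z} := by
  ext q
  have lift_iff := exists_lift_iff_mem_wvolt Θ hW 1 q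
  simp only [mul_one] at lift_iff
  exact lift_iff
end

section
/- Let Γ = GenCov(Δ,G,ω,ζ). Then Γ has a semi-edge (a self-inverse dart) if and only if there is a dart x of Δ with x = x⁻¹ and ζ(x) ∈ ω(x). -/
namespace GenVoltage

variable {V D G : Type*} [Group G] {Δ : PreGraph V D} (Θ : GenVoltage V D G Δ)

theorem dmk_surjective : Function.Surjective (Function.uncurry Θ.dmk) := by
  rintro ⟨x, q⟩
  induction q using Quotient.ind with
  | _ g => exact ⟨(x, g), rfl⟩

theorem dmk_eq_dmk_iff {x : D} {a b : G} : Θ.dmk x a = Θ.dmk x b ↔ b * a⁻¹ ∈ Θ.ωd x := by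
  simp only [dmk, Sigma.mk.injEq, heq_eq_eq, true_and, Quotient.eq]
  exact QuotientGroup.rightRel_apply

theorem covInv_dmk (x : D) (g : G) : Θ.covInv (Θ.dmk x g) = Θ.dmk (Δ.inv x) (Θ.ζ x * g) := rfl

theorem covInv_dmk_eq_self_iff (x : D) (g : G) :
    Θ.covInv (Θ.dmk x g) = Θ.dmk x g ↔ Δ.inv x = x ∧ Θ.ζ x ∈ Θ.ωd x := by
  have coset_eq_iff : Θ.dmk x (Θ.ζ x * g) = Θ.dmk x g ↔ Θ.ζ x ∈ Θ.ωd x := by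
    rw [dmk_eq_dmk_iff, mul_inv_rev, mul_inv_cancel_left, inv_mem_iff]
  rw [covInv_dmk]
  constructor
  · intro h
    have hx : Δ.inv x = x := congrArg Sigma.fst h
    rw [hx] at h
    exact ⟨hx, coset_eq_iff.1 h⟩
  · rintro ⟨hx, hζ⟩
    rw [hx]
    exact coset_eq_iff.2 hζ

end GenVoltage

/-- The generalised cover has a semi-edge iff some dart `x` of `Δ` satisfies
`x = x⁻¹` and `ζ(x) ∈ ω(x)`. -/
theorem stmt_17 {V D G : Type*} [Group G] {Δ : PreGraph V D}
    (Θ : GenVoltage V D G Δ) :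
    (∃ p : Θ.CovD, Θ.covInv p = p) ↔ ∃ x : D, Δ.inv x = x ∧ Θ.ζ x ∈ Θ.ωd x := by
  constructor
  · rintro ⟨p, hp⟩
    obtain ⟨⟨x, g⟩, rfl⟩ := Θ.dmk_surjective p
    exact ⟨x, (Θ.covInv_dmk_eq_self_iff x g).1 hp⟩
  · rintro ⟨x, hx⟩
    exact ⟨Θ.dmk x 1, (Θ.covInv_dmk_eq_self_iff x 1).2 hx⟩
end
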